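/- arXiv:2502.19923 — 9 statements merged into one kernel-verified Lean document; each statement's English description precedes it below -/
import Mathlib

section
/- Let Φmax be a max-Bellman operator on ℝ^d and t ∈ ℝ^d with Φmax(t) = t. Let x, y ∈ ℝ^d satisfy x ≤ t and y ≤ t componentwise, and suppose that for every i the sign of x_i − t_i equals the sign of y_i − t_i (i.e., x_i = t_i if and only if y_i = t_i). Then for every i the sign of Φmax(x)_i − t_i equals the sign of Φmax(y)_i − t_i. -/
theorem stmt_3
    (d : ℕ) (hd : 1 ≤ d)
    (A : Fin d → Type) [∀ i, Fintype (A i)] [∀ i, Nonempty (A i)]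
    (p : ∀ i, A i → Fin d → ℝ) (c : ∀ i, A i → ℝ)
    (hp : ∀ i a j, 0 ≤ p i a j)
    (hc : ∀ i a, 0 ≤ c i a)
    (hsub : ∀ i a, c i a + ∑ j, p i a j ≤ 1)
    (Φ : (Fin d → ℝ) → (Fin d → ℝ))
    (hΦ : ∀ x i, Φ x i =
      Finset.univ.sup' Finset.univ_nonempty (fun a : A i => (∑ j, p i a j * x j) + c i a))
    (t : Fin d → ℝ) (hfix : Φ t = t)
    (x y : Fin d → ℝ) (hx : x ≤ t) (hy : y ≤ t)
    (hsign : ∀ i, Real.sign (x i - t i) = Real.sign (y i - t i)) :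
    ∀ i, Real.sign (Φ x i - t i) = Real.sign (Φ y i - t i)
  := by
  intro i
  have hti : Φ t i = t i := congrFun hfix i
  have hL : ∀ z : Fin d → ℝ, z ≤ t → ∀ a : A i,
      (∑ j, p i a j * z j) + c i a ≤ t i := by
    intro z hz a
    have h1 : (∑ j, p i a j * z j) + c i a ≤ (∑ j, p i a j * t j) + c i a := by
      gcongr with j _
      · exact hp i a j
      · exact hz j
    have h2 : (∑ j, p i a j * t j) + c i a ≤ Φ t i := by
      rw [hΦ]
      exact Finset.le_sup' (fun a : A i => (∑ j, p i a j * t j) + c i a) (Finset.mem_univ a)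
    rw [hti] at h2
    exact h1.trans h2
  have hxle : Φ x i ≤ t i := by
    rw [hΦ]; exact Finset.sup'_le _ _ (fun a _ => hL x hx a)
  have hyle : Φ y i ≤ t i := by
    rw [hΦ]; exact Finset.sup'_le _ _ (fun a _ => hL y hy a)
  have key : ∀ u v : Fin d → ℝ, u ≤ t → v ≤ t →
      (∀ j, Real.sign (u j - t j) = Real.sign (v j - t j)) →
      Φ u i = t i → Φ v i = t i := by
    intro u v hu hv hs heq
    obtain ⟨a, -, ha⟩ := Finset.exists_mem_eq_sup' (Finset.univ_nonempty)
      (fun a : A i => (∑ j, p i a j * u j) + c i a)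
    have hau : (∑ j, p i a j * u j) + c i a = t i := by
      rw [hΦ, ha] at heq; exact heq
    have hat : (∑ j, p i a j * t j) + c i a ≤ t i := hL t le_rfl a
    have hsum_le : (∑ j, p i a j * u j) ≤ ∑ j, p i a j * t j := by
      gcongr with j _
      · exact hp i a j
      · exact hu j
    have hsum_eq : (∑ j, p i a j * u j) = ∑ j, p i a j * t j := by
      linarith
    have hterm : ∀ j ∈ Finset.univ, p i a j * (t j - u j) = 0 := by
      rw [← Finset.sum_eq_zero_iff_of_nonneg]
      · have hsplit : ∑ j, p i a j * (t j - u j)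
            = (∑ j, p i a j * t j) - ∑ j, p i a j * u j := by
          rw [← Finset.sum_sub_distrib]
          exact Finset.sum_congr rfl (fun j _ => by ring)
        rw [hsplit, hsum_eq, sub_self]
      · intro j _
        exact mul_nonneg (hp i a j) (by linarith [hu j])
    have hvterm : ∀ j, p i a j * v j = p i a j * t j := by
      intro j
      rcases eq_or_ne (p i a j) 0 with h0 | h0
      · rw [h0]; ring
      · have := hterm j (Finset.mem_univ j)
        have hut : u j = t j := by
          rcases mul_eq_zero.mp this with h | h
          · exact absurd h h0
          · linarith
        have : Real.sign (v j - t j) = 0 := by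
          rw [← hs j, hut, sub_self, Real.sign_zero]
        have hvt : v j = t j := by
          have := Real.sign_eq_zero_iff.mp this
          linarith
        rw [hvt]
    have hav : (∑ j, p i a j * v j) + c i a = t i := by
      have : (∑ j, p i a j * v j) = ∑ j, p i a j * t j :=
        Finset.sum_congr rfl (fun j _ => hvterm j)
      rw [this, ← hsum_eq]; exact hau
    have hge : t i ≤ Φ v i := by
      rw [hΦ]
      calc t i = (∑ j, p i a j * v j) + c i a := hav.symm
        _ ≤ _ := Finset.le_sup' (fun a : A i => (∑ j, p i a j * v j) + c i a) (Finset.mem_univ a)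
    have hle : Φ v i ≤ t i := by
      rw [hΦ]; exact Finset.sup'_le _ _ (fun a _ => hL v hv a)
    linarith
  rcases eq_or_lt_of_le hxle with hxe | hxl
  · have hye : Φ y i = t i := key x y hx hy hsign hxe
    rw [hxe, hye]
  · have hyne : Φ y i < t i := by
      rcases eq_or_lt_of_le hyle with hye | h
      · exact absurd (key y x hy hx (fun j => (hsign j).symm) hye) (ne_of_lt hxl)
      · exact h
    rw [Real.sign_of_neg (by linarith), Real.sign_of_neg (by linarith)]
end

section
/- Let Φmin be a min-Bellman operator on ℝ^d and t ∈ ℝ^d with Φmin(t) = t. Let x, y ∈ ℝ^d satisfy t ≤ x and t ≤ y componentwise, and suppose that for every i the sign of x_i − t_i equals the sign of y_i − t_i (i.e., x_i = t_i if and only if y_i = t_i). Then for every i the sign of Φmin(x)_i − t_i equals the sign of Φmin(y)_i − t_i. -/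
theorem stmt_5
    (d : ℕ) (hd : 1 ≤ d)
    (A : Fin d → Type) [∀ i, Fintype (A i)] [∀ i, Nonempty (A i)]
    (p : ∀ i, A i → Fin d → ℝ) (c : ∀ i, A i → ℝ)
    (hp : ∀ i a j, 0 ≤ p i a j)
    (hc : ∀ i a, 0 ≤ c i a)
    (hsub : ∀ i a, c i a + ∑ j, p i a j ≤ 1)
    (Φ : (Fin d → ℝ) → (Fin d → ℝ))
    (hΦ : ∀ x i, Φ x i =
      Finset.univ.inf' Finset.univ_nonempty (fun a : A i => (∑ j, p i a j * x j) + c i a))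
    (t : Fin d → ℝ) (hfix : Φ t = t)
    (x y : Fin d → ℝ) (hx : t ≤ x) (hy : t ≤ y)
    (hsign : ∀ i, Real.sign (x i - t i) = Real.sign (y i - t i)) :
    ∀ i, Real.sign (Φ x i - t i) = Real.sign (Φ y i - t i)
  := by
  intro i
  have htfix : ∀ i, t i = Finset.univ.inf' Finset.univ_nonempty
      (fun a : A i => (∑ j, p i a j * t j) + c i a) := by
    intro i; rw [← hΦ t i, hfix]
  have hge : ∀ (z : Fin d → ℝ), t ≤ z → ∀ a : A i,
      t i ≤ (∑ j, p i a j * z j) + c i a := by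
    intro z hz a
    have h1 : t i ≤ (∑ j, p i a j * t j) + c i a := by
      rw [htfix i]
      exact Finset.inf'_le _ (Finset.mem_univ a)
    refine h1.trans ?_
    gcongr with j _
    exacts [hp i a j, hz j]
  have hΦge : ∀ (z : Fin d → ℝ), t ≤ z → t i ≤ Φ z i := by
    intro z hz
    rw [hΦ z i]
    exact Finset.le_inf' _ _ (fun a _ => hge z hz a)
  have key : ∀ z : Fin d → ℝ, t ≤ z → (Φ z i = t i ↔
      ∃ a : A i, ((∑ j, p i a j * t j) + c i a = t i ∧ ∀ j, p i a j ≠ 0 → z j = t j)) := by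
    intro z hz
    constructor
    · intro h
      obtain ⟨a, _, ha⟩ := Finset.exists_mem_eq_inf' (Finset.univ_nonempty)
        (fun a : A i => (∑ j, p i a j * z j) + c i a)
      have haz : (∑ j, p i a j * z j) + c i a = t i := by
        rw [← hΦ z i, h] at ha; exact ha.symm
      have h1 : t i ≤ (∑ j, p i a j * t j) + c i a := by
        rw [htfix i]; exact Finset.inf'_le _ (Finset.mem_univ a)
      have h2 : (∑ j, p i a j * t j) + c i a ≤ (∑ j, p i a j * z j) + c i a := by
        gcongr with j _
        exacts [hp i a j, hz j]
      have heq : (∑ j, p i a j * t j) + c i a = t i :=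
        le_antisymm (haz ▸ h2) h1
      refine ⟨a, heq, ?_⟩
      have hsum : ∑ j, p i a j * (z j - t j) = 0 := by
        have hs : ∑ j, p i a j * (z j - t j)
            = (∑ j, p i a j * z j) - ∑ j, p i a j * t j := by
          rw [← Finset.sum_sub_distrib]
          exact Finset.sum_congr rfl (fun j _ => by ring)
        rw [hs]; linarith
      intro j hpj
      have hterm := (Finset.sum_eq_zero_iff_of_nonneg
        (fun j _ => mul_nonneg (hp i a j) (by linarith [hz j]))).mp hsum j (Finset.mem_univ j)
      rcases mul_eq_zero.mp hterm with h' | h'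
      · exact absurd h' hpj
      · linarith
    · rintro ⟨a, heq, hz0⟩
      have hsumeq : (∑ j, p i a j * z j) = ∑ j, p i a j * t j := by
        refine Finset.sum_congr rfl (fun j _ => ?_)
        by_cases h' : p i a j = 0
        · simp [h']
        · rw [hz0 j h']
      have hle : Φ z i ≤ t i := by
        rw [hΦ z i]
        refine (Finset.inf'_le _ (Finset.mem_univ a)).trans ?_
        rw [hsumeq, heq]
      exact le_antisymm hle (hΦge z hz)
  have hiff : Φ x i = t i ↔ Φ y i = t i := by
    rw [key x hx, key y hy]
    constructor <;> rintro ⟨a, h1, h2⟩ <;> refine ⟨a, h1, fun j hpj => ?_⟩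
    · have h0 : x j - t j = 0 := by rw [h2 j hpj]; ring
      have := hsign j
      rw [h0, Real.sign_zero] at this
      have := (Real.sign_eq_zero_iff).mp this.symm
      linarith
    · have h0 : y j - t j = 0 := by rw [h2 j hpj]; ring
      have := hsign j
      rw [h0, Real.sign_zero] at this
      have := (Real.sign_eq_zero_iff).mp this
      linarith
  rcases eq_or_lt_of_le (hΦge x hx) with h | h
  · have h2 := hiff.mp h.symm
    rw [← h, h2]
  · have h2 : t i < Φ y i := by
      rcases eq_or_lt_of_le (hΦge y hy) with h' | h'
      · exact absurd (hiff.mpr h'.symm) (by linarith)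
      · exact h'
    rw [Real.sign_of_pos (by linarith), Real.sign_of_pos (by linarith)]
end

section
/- Let Φmax be a max-Bellman operator on ℝ^d, let t ∈ [0,1]^d with Φmax(t) = t, and let s ∈ [0,1]^d be such that the iterates Φmax^n(s) converge to t as n → ∞ (in the ℓ∞-norm). Then there exists N ∈ ℕ such that for every n ≥ N and every state i there is a tight action a ∈ A_i with Φmax^{n+1}(s)_i = L_a(Φmax^n(s)); that is, from step N on, each iteration is obtained by applying only tight actions. -/
theorem stmt_10
    (d : ℕ) (hd : 1 ≤ d)
    (A : Fin d → Type) [∀ i, Fintype (A i)] [∀ i, Nonempty (A i)]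
    (p : ∀ i, A i → Fin d → ℝ) (c : ∀ i, A i → ℝ)
    (hp : ∀ i a j, 0 ≤ p i a j)
    (hc : ∀ i a, 0 ≤ c i a)
    (hsub : ∀ i a, c i a + ∑ j, p i a j ≤ 1)
    (Φ : (Fin d → ℝ) → (Fin d → ℝ))
    (hΦ : ∀ x i, Φ x i =
      Finset.univ.sup' Finset.univ_nonempty (fun a : A i => (∑ j, p i a j * x j) + c i a))
    (t : Fin d → ℝ) (ht : ∀ i, t i ∈ Set.Icc (0:ℝ) 1) (hfix : Φ t = t)
    (s : Fin d → ℝ) (hs : ∀ i, s i ∈ Set.Icc (0:ℝ) 1)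
    (hconv : Filter.Tendsto (fun n => Φ^[n] s) Filter.atTop (nhds t)) :
    ∃ N : ℕ, ∀ n, N ≤ n → ∀ i,
      ∃ a : A i, ((∑ j, p i a j * t j) + c i a = t i) ∧
        Φ^[n+1] s i = (∑ j, p i a j * Φ^[n] s j) + c i a
  := by
  -- Lipschitz estimate
  have lip : ∀ (i : Fin d) (a : A i) (x y : Fin d → ℝ),
      (∑ j, p i a j * x j) - (∑ j, p i a j * y j) ≤ dist x y := by
    intro i a x y
    rw [← Finset.sum_sub_distrib]
    calc (∑ j, (p i a j * x j - p i a j * y j))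
        ≤ ∑ j : Fin d, p i a j * dist x y := by
          apply Finset.sum_le_sum
          intro j _
          rw [← mul_sub]
          apply mul_le_mul_of_nonneg_left _ (hp i a j)
          calc x j - y j ≤ |x j - y j| := le_abs_self _
            _ = dist (x j) (y j) := (Real.dist_eq _ _).symm
            _ ≤ dist x y := dist_le_pi_dist x y j
      _ = (∑ j, p i a j) * dist x y := by rw [Finset.sum_mul]
      _ ≤ 1 * dist x y := by
          apply mul_le_mul_of_nonneg_right _ dist_nonneg
          have := hsub i a
          linarith [hc i a]
      _ = dist x y := one_mul _
  -- each action value at t is ≤ t i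
  have hle : ∀ (i : Fin d) (a : A i), (∑ j, p i a j * t j) + c i a ≤ t i := by
    intro i a
    have := hΦ t i
    rw [hfix] at this
    rw [this]
    exact Finset.le_sup' (fun a : A i => (∑ j, p i a j * t j) + c i a) (Finset.mem_univ a)
  haveI : Nonempty (Fin d) := ⟨⟨0, hd⟩⟩
  haveI : Nonempty ((i : Fin d) × A i) := by
    obtain ⟨i⟩ := (inferInstance : Nonempty (Fin d))
    obtain ⟨a⟩ := (inferInstance : Nonempty (A i))
    exact ⟨⟨i, a⟩⟩
  set f : ((i : Fin d) × A i) → ℝ := fun q =>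
    if (∑ j, p q.1 q.2 j * t j) + c q.1 q.2 = t q.1 then 1
    else t q.1 - ((∑ j, p q.1 q.2 j * t j) + c q.1 q.2) with hf
  set ε : ℝ := Finset.univ.inf' Finset.univ_nonempty f with hε
  have hεpos : 0 < ε := by
    rw [hε]
    apply (Finset.lt_inf'_iff Finset.univ_nonempty).mpr
    intro q _
    rw [hf]
    by_cases h : (∑ j, p q.1 q.2 j * t j) + c q.1 q.2 = t q.1
    · simp [h]
    · simp only [h, if_false]
      have := hle q.1 q.2
      cases lt_or_eq_of_le this with
      | inl h' => linarith
      | inr h' => exact absurd h' h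
  obtain ⟨N, hN⟩ := (Metric.tendsto_atTop.mp hconv) (ε/3) (by linarith)
  refine ⟨N, fun n hn i => ?_⟩
  set x := Φ^[n] s with hx
  have hdx : dist x t < ε / 3 := hN n hn
  -- argmax action
  obtain ⟨a, _, ha⟩ := Finset.exists_mem_eq_sup' (Finset.univ_nonempty (α := A i))
    (fun a : A i => (∑ j, p i a j * x j) + c i a)
  have hstep : Φ^[n+1] s i = (∑ j, p i a j * x j) + c i a := by
    rw [Function.iterate_succ_apply', ← hx, hΦ x i, ha]
  refine ⟨a, ?_, hstep⟩
  -- show a is tight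
  by_contra h
  have hεle : ε ≤ t i - ((∑ j, p i a j * t j) + c i a) := by
    have := Finset.inf'_le f (Finset.mem_univ (⟨i, a⟩ : (i : Fin d) × A i))
    rw [hf] at this
    simp only [h, if_false] at this
    exact this
  -- choose maximizer b at t
  obtain ⟨b, _, hb⟩ := Finset.exists_mem_eq_sup' (Finset.univ_nonempty (α := A i))
    (fun a : A i => (∑ j, p i a j * t j) + c i a)
  have hbt : (∑ j, p i b j * t j) + c i b = t i := by
    have := hΦ t i
    rw [hfix] at this
    rw [this]
    exact hb.symm
  -- Φ(x)_i ≥ L_b(x) ≥ L_b(t) - ε/3 = t i - ε/3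
  have h1 : (∑ j, p i b j * x j) + c i b ≤ (∑ j, p i a j * x j) + c i a := by
    rw [← ha]
    exact Finset.le_sup' (fun a : A i => (∑ j, p i a j * x j) + c i a) (Finset.mem_univ b)
  have h2 := lip i b t x
  have h3 := lip i a x t
  -- distances
  have h4 : dist t x < ε / 3 := by rw [dist_comm]; exact hdx
  linarith
end

section
/- Let Φmax be a max-Bellman operator on ℝ^d and t ∈ ℝ^d with Φmax(t) = t, and assume that every action a ∈ A_i (for every i) is tight for t. Let x, y ∈ ℝ^d satisfy t ≤ x and t ≤ y componentwise, and suppose that for every i the sign of x_i − t_i equals the sign of y_i − t_i. Then for every i the sign of Φmax(x)_i − t_i equals the sign of Φmax(y)_i − t_i. -/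
theorem stmt_11
    (d : ℕ) (hd : 1 ≤ d)
    (A : Fin d → Type) [∀ i, Fintype (A i)] [∀ i, Nonempty (A i)]
    (p : ∀ i, A i → Fin d → ℝ) (c : ∀ i, A i → ℝ)
    (hp : ∀ i a j, 0 ≤ p i a j)
    (hc : ∀ i a, 0 ≤ c i a)
    (hsub : ∀ i a, c i a + ∑ j, p i a j ≤ 1)
    (Φ : (Fin d → ℝ) → (Fin d → ℝ))
    (hΦ : ∀ x i, Φ x i =
      Finset.univ.sup' Finset.univ_nonempty (fun a : A i => (∑ j, p i a j * x j) + c i a))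
    (t : Fin d → ℝ) (hfix : Φ t = t)
    (htight : ∀ i (a : A i), (∑ j, p i a j * t j) + c i a = t i)
    (x y : Fin d → ℝ) (hx : t ≤ x) (hy : t ≤ y)
    (hsign : ∀ i, Real.sign (x i - t i) = Real.sign (y i - t i)) :
    ∀ i, Real.sign (Φ x i - t i) = Real.sign (Φ y i - t i)
  := by
  intro i
  have hxt : ∀ j, x j = t j ↔ y j = t j := by
    intro j
    constructor
    · intro h0
      have h1 : Real.sign (y j - t j) = 0 := by
        rw [← hsign j, h0, sub_self, Real.sign_zero]
      have := Real.sign_eq_zero_iff.mp h1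
      linarith
    · intro h0
      have h1 : Real.sign (x j - t j) = 0 := by
        rw [hsign j, h0, sub_self, Real.sign_zero]
      have := Real.sign_eq_zero_iff.mp h1
      linarith
  have key : ∀ (z : Fin d → ℝ), t ≤ z →
      (t i ≤ Φ z i ∧ (Φ z i = t i ↔ ∀ a : A i, ∀ j, p i a j = 0 ∨ z j = t j)) := by
    intro z hz
    have hterm : ∀ a : A i, t i ≤ (∑ j, p i a j * z j) + c i a := by
      intro a
      rw [← htight i a]
      have : ∑ j, p i a j * t j ≤ ∑ j, p i a j * z j :=
        Finset.sum_le_sum fun j _ => mul_le_mul_of_nonneg_left (hz j) (hp i a j)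
      linarith
    have hle : t i ≤ Φ z i := by
      rw [hΦ]
      obtain ⟨a⟩ := (inferInstance : Nonempty (A i))
      exact le_trans (hterm a) (Finset.le_sup' (fun a : A i => (∑ j, p i a j * z j) + c i a) (Finset.mem_univ a))
    refine ⟨hle, ?_, ?_⟩
    · intro heq a j
      have hsup_le : (∑ j, p i a j * z j) + c i a ≤ t i := by
        rw [← heq, hΦ]
        exact Finset.le_sup' (fun a : A i => (∑ j, p i a j * z j) + c i a) (Finset.mem_univ a)
      have heqa : (∑ j, p i a j * z j) + c i a = t i := le_antisymm hsup_le (hterm a)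
      have hsum0 : ∑ j, p i a j * (z j - t j) = 0 := by
        have h1 : ∑ j, p i a j * (z j - t j)
            = (∑ j, p i a j * z j) - (∑ j, p i a j * t j) := by
          rw [← Finset.sum_sub_distrib]
          exact Finset.sum_congr rfl fun j _ => by ring
        rw [h1]
        linarith [htight i a]
      have hz0 := (Finset.sum_eq_zero_iff_of_nonneg
        (fun j _ => mul_nonneg (hp i a j) (sub_nonneg.mpr (hz j)))).mp hsum0
      rcases mul_eq_zero.mp (hz0 j (Finset.mem_univ j)) with h | h
      · exact Or.inl h
      · exact Or.inr (by linarith [sub_eq_zero.mp h])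
    · intro hall
      refine le_antisymm ?_ hle
      rw [hΦ]
      apply Finset.sup'_le
      intro a _
      have hs : ∑ j, p i a j * z j = ∑ j, p i a j * t j :=
        Finset.sum_congr rfl fun j _ => by
          rcases hall a j with h | h <;> simp [h]
      rw [hs]
      linarith [htight i a]
  obtain ⟨hx1, hx2⟩ := key x hx
  obtain ⟨hy1, hy2⟩ := key y hy
  have hiff : Φ x i = t i ↔ Φ y i = t i := by
    rw [hx2, hy2]
    constructor <;> intro h a j <;> rcases h a j with h' | h'
    · exact Or.inl h'
    · exact Or.inr ((hxt j).mp h')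
    · exact Or.inl h'
    · exact Or.inr ((hxt j).mpr h')
  by_cases h : Φ x i = t i
  · rw [h, hiff.mp h, sub_self, Real.sign_zero]
  · have hx' : 0 < Φ x i - t i := sub_pos.mpr (lt_of_le_of_ne hx1 (Ne.symm h))
    have hyne : Φ y i ≠ t i := fun he => h (hiff.mpr he)
    have hy' : 0 < Φ y i - t i := sub_pos.mpr (lt_of_le_of_ne hy1 (Ne.symm hyne))
    rw [Real.sign_of_pos hx', Real.sign_of_pos hy']
end

section
/- Let Φmin be a min-Bellman operator on ℝ^d and t ∈ ℝ^d with Φmin(t) = t, and assume that every action a ∈ A_i (for every i) is tight for t. Let x, y ∈ ℝ^d satisfy x ≤ t and y ≤ t componentwise, and suppose that for every i the sign of x_i − t_i equals the sign of y_i − t_i. Then for every i the sign of Φmin(x)_i − t_i equals the sign of Φmin(y)_i − t_i. -/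
theorem stmt_12
    (d : ℕ) (hd : 1 ≤ d)
    (A : Fin d → Type) [∀ i, Fintype (A i)] [∀ i, Nonempty (A i)]
    (p : ∀ i, A i → Fin d → ℝ) (c : ∀ i, A i → ℝ)
    (hp : ∀ i a j, 0 ≤ p i a j)
    (hc : ∀ i a, 0 ≤ c i a)
    (hsub : ∀ i a, c i a + ∑ j, p i a j ≤ 1)
    (Φ : (Fin d → ℝ) → (Fin d → ℝ))
    (hΦ : ∀ x i, Φ x i =
      Finset.univ.inf' Finset.univ_nonempty (fun a : A i => (∑ j, p i a j * x j) + c i a))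
    (t : Fin d → ℝ) (hfix : Φ t = t)
    (htight : ∀ i (a : A i), (∑ j, p i a j * t j) + c i a = t i)
    (x y : Fin d → ℝ) (hx : x ≤ t) (hy : y ≤ t)
    (hsign : ∀ i, Real.sign (x i - t i) = Real.sign (y i - t i)) :
    ∀ i, Real.sign (Φ x i - t i) = Real.sign (Φ y i - t i)
  := by
  -- pointwise L_a(z) ≤ t i for z ≤ t
  have hL : ∀ (z : Fin d → ℝ), z ≤ t → ∀ i (a : A i),
      (∑ j, p i a j * z j) + c i a ≤ t i := by
    intro z hz i a
    rw [← htight i a]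
    gcongr with j
    · exact hp i a j
    · exact hz j
  have hle : ∀ (z : Fin d → ℝ), z ≤ t → ∀ i, Φ z i ≤ t i := by
    intro z hz i
    rw [hΦ]
    exact Finset.inf'_le_of_le _ (Finset.mem_univ (Classical.arbitrary (A i)))
      (hL z hz i _)
  -- characterization of equality
  have hchar : ∀ (z : Fin d → ℝ), z ≤ t → ∀ i,
      (Φ z i = t i ↔ ∀ (a : A i) j, 0 < p i a j → z j = t j) := by
    intro z hz i
    constructor
    · intro h a j hpj
      have ha : (∑ j, p i a j * z j) + c i a = t i := by
        have h1 : t i ≤ (∑ j, p i a j * z j) + c i a := by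
          rw [← h, hΦ]
          exact Finset.inf'_le _ (Finset.mem_univ a)
        exact le_antisymm (hL z hz i a) h1
      -- sum of nonpositive terms equal to 0
      have hsum : ∑ j, p i a j * (z j - t j) = 0 := by
        have := htight i a
        have : (∑ j, p i a j * z j) - (∑ j, p i a j * t j) = 0 := by
          have := ha
          nlinarith [htight i a]
        rw [← this]
        rw [← Finset.sum_sub_distrib]
        congr 1; ext j; ring
      have hterm : ∀ j ∈ Finset.univ, p i a j * (z j - t j) ≤ 0 := by
        intro j _
        exact mul_nonpos_of_nonneg_of_nonpos (hp i a j) (by linarith [hz j])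
      have hzero := (Finset.sum_eq_zero_iff_of_nonpos hterm).mp hsum j (Finset.mem_univ j)
      have : z j - t j = 0 := by
        rcases mul_eq_zero.mp hzero with h' | h'
        · exact absurd h' (ne_of_gt hpj)
        · exact h'
      linarith
    · intro h
      rw [hΦ]
      apply le_antisymm
      · exact Finset.inf'_le_of_le _ (Finset.mem_univ (Classical.arbitrary (A i)))
          (hL z hz i _)
      · apply Finset.le_inf'
        intro a _
        rw [← htight i a]
        apply le_of_eq
        congr 1
        apply Finset.sum_congr rfl
        intro j _
        rcases eq_or_lt_of_le (hp i a j) with h' | h'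
        · rw [← h', zero_mul, zero_mul]
        · rw [h a j h']
    -- end
  -- x j = t j ↔ y j = t j
  have hiff : ∀ j, x j = t j ↔ y j = t j := by
    intro j
    have := hsign j
    constructor
    · intro h
      have : Real.sign (y j - t j) = 0 := by rw [← hsign j, h, sub_self, Real.sign_zero]
      have := Real.sign_eq_zero_iff.mp this
      linarith
    · intro h
      have : Real.sign (x j - t j) = 0 := by rw [hsign j, h, sub_self, Real.sign_zero]
      have := Real.sign_eq_zero_iff.mp this
      linarith
  intro i
  have hxe := hchar x hx i
  have hye := hchar y hy i
  have hkey : Φ x i = t i ↔ Φ y i = t i := by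
    rw [hxe, hye]
    constructor
    · intro h a j hpj; exact (hiff j).mp (h a j hpj)
    · intro h a j hpj; exact (hiff j).mpr (h a j hpj)
  by_cases hx0 : Φ x i = t i
  · rw [hx0, hkey.mp hx0, sub_self, Real.sign_zero]
  · have hy0 : Φ y i ≠ t i := fun h => hx0 (hkey.mpr h)
    have h1 : Φ x i - t i < 0 := lt_of_le_of_ne (by linarith [hle x hx i]) (by intro h; apply hx0; linarith)
    have h2 : Φ y i - t i < 0 := lt_of_le_of_ne (by linarith [hle y hy i]) (by intro h; apply hy0; linarith)
    rw [Real.sign_of_neg h1, Real.sign_of_neg h2]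
end

section
/- Let r_1,…,r_k ∈ ℝ² and q_1,…,q_ℓ ∈ ℝ² (k, ℓ ≥ 1) be substochastic row vectors, and define F : ℝ² → ℝ² by F(v) = (max_{1≤i≤k} ⟨r_i, v⟩, max_{1≤j≤ℓ} ⟨q_j, v⟩), which is the componentwise maximum of M_{i,j}·v over the product family of 2×2 matrices M_{i,j} with first row r_i and second row q_j. Then for every ε ∈ ℝ², at least one of the following holds: (1) F^n(ε) ≠ 0 for all n ≥ 0; (2) F²(ε) is comparable with the zero vector 0. -/
/-!
Each coordinate of `F` is a maximum of linear forms with nonnegative coefficients, so `F` is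
monotone, positively homogeneous and subadditive. Monotonicity and homogeneity give
`F y ≤ c • F z` whenever `y ≤ c • z` with `c ≥ 0`; in the plane, two vectors whose `i`-th
coordinates have the same strict sign become comparable once one of them is rescaled. Hence if
`F x = 0`, then `F y` is comparable with `0` for every `y` with `x i * y i > 0`.

Suppose some iterate of `ε` vanishes and let `x = F (F v)` be the last nonzero point of the orbit
of `F² ε`. If `x ≥ 0`, adding multiples of `x` does not change `F`, so every value of `F` is
comparable with `0`. If `x i < 0 < x j`, the observation above puts `F v` and `v` in the open
quadrant `y i > 0 > y j`; rescaled, they are comparable, hence so are `F v` and `F (F v) = x`,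
which lie in opposite quadrants. If `x ≤ 0`, then `F z ≥ 0` whenever `z` dominates a nonnegative
multiple of `x`, and going back two steps along the orbit this gives `F (F y) ≥ 0` for all `y`.
-/

open Finset

structure IsMonotoneSublinear {E E' : Type*} [AddCommMonoid E] [Preorder E] [Module ℝ E]
    [AddCommMonoid E'] [Preorder E'] [Module ℝ E'] (F : E → E') : Prop where
  monotone : Monotone F
  map_smul : ∀ c : ℝ, 0 ≤ c → ∀ y, F (c • y) = c • F y
  map_add_le : ∀ y z, F (y + z) ≤ F y + F z

theorem isMonotoneSublinear_of_eq_sup'_dotProduct {ι κ : Type*} [Fintype κ] {s : Finset ι}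
    (hs : s.Nonempty) {a : ι → κ → ℝ} (ha : ∀ i, 0 ≤ a i) {f : (κ → ℝ) → ℝ}
    (hf : ∀ y, f y = s.sup' hs fun i => a i ⬝ᵥ y) : IsMonotoneSublinear f where
  monotone y z hyz := by
    simp only [hf]
    exact sup'_le _ _ fun i hi =>
      le_sup'_of_le _ hi (dotProduct_le_dotProduct_of_nonneg_left hyz (ha i))
  map_smul c hc y := by
    simp only [hf, dotProduct_smul, smul_eq_mul, mul₀_sup' hc]
  map_add_le y z := by
    simp only [hf]
    exact sup'_le _ _ fun i hi => dotProduct_add (a i) y z ▸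
      add_le_add (le_sup' (fun i => a i ⬝ᵥ y) hi) (le_sup' (fun i => a i ⬝ᵥ z) hi)

theorem exists_nonneg_smul_le {ι : Type*} [Fintype ι] {x y : ι → ℝ}
    (h : ∀ k, x k < 0 ∨ (x k ≤ 0 ∧ 0 ≤ y k)) : ∃ c : ℝ, 0 ≤ c ∧ c • x ≤ y := by
  refine ⟨∑ k, |y k| / |x k|, by positivity, fun k => ?_⟩
  have hc : |y k| / |x k| ≤ ∑ k, |y k| / |x k| :=
    single_le_sum (f := fun k => |y k| / |x k|) (fun k _ => by positivity) (mem_univ k)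
  rcases h k with hk | ⟨hk, hyk⟩
  · have hyk : |y k| / |x k| * x k = -|y k| := by
      rw [abs_of_neg hk, div_neg, neg_mul, div_mul_cancel₀ _ hk.ne]
    calc (∑ k, |y k| / |x k|) * x k ≤ |y k| / |x k| * x k := by nlinarith
      _ ≤ y k := by linarith [neg_abs_le (y k)]
  · exact (mul_nonpos_of_nonneg_of_nonpos (by positivity) hk).trans hyk

theorem Fin.eq_or_eq_of_ne_of_two {i j : Fin 2} (hij : i ≠ j) (k : Fin 2) : k = i ∨ k = j := by
  omega

theorem Pi.le_iff_of_fin_two {α : Type*} [Preorder α] {i j : Fin 2} (hij : i ≠ j)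
    {y z : Fin 2 → α} : y ≤ z ↔ y i ≤ z i ∧ y j ≤ z j := by
  refine ⟨fun h => ⟨h i, h j⟩, fun h k => ?_⟩
  obtain rfl | rfl := Fin.eq_or_eq_of_ne_of_two hij k
  exacts [h.1, h.2]

theorem not_comparable_iff_mul_neg {i j : Fin 2} (hij : i ≠ j) {y : Fin 2 → ℝ} :
    ¬ (y ≤ 0 ∨ 0 ≤ y) ↔ y i * y j < 0 := by
  simp only [Pi.le_iff_of_fin_two hij, Pi.zero_apply, mul_neg_iff]
  constructor
  · intro h
    push Not at h
    rcases lt_or_ge (y i) 0 with hi | hi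
    · exact Or.inr ⟨hi, h.1 hi.le⟩
    · exact Or.inl ⟨lt_of_le_of_ne hi fun h0 => lt_asymm (h.1 h0.symm.le) (h.2 hi), h.2 hi⟩
  · rintro (⟨hi, hj⟩ | ⟨hi, hj⟩) (⟨hi', hj'⟩ | ⟨hi', hj'⟩) <;> linarith

theorem exists_le_smul_or_smul_le {x y : Fin 2 → ℝ} {i : Fin 2} (h : 0 < x i * y i) :
    ∃ c : ℝ, 0 < c ∧ (y ≤ c • x ∨ c • x ≤ y) := by
  obtain ⟨j, hji⟩ := exists_ne i
  have hxi : x i ≠ 0 := by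
    rintro h0
    simp [h0] at h
  refine ⟨y i / x i,
    div_pos_iff.2 (pos_and_pos_or_neg_and_neg_of_mul_pos (mul_comm (x i) _ ▸ h)), ?_⟩
  simp only [Pi.le_iff_of_fin_two hji.symm, Pi.smul_apply, smul_eq_mul,
    div_mul_cancel₀ _ hxi, le_refl, true_and]
  exact le_total _ _

theorem Function.exists_iterate_ne_of_iterate_eq {α : Type*} {f : α → α} {a b : α}
    (ha : a ≠ b) {n : ℕ} (hn : f^[n] a = b) : ∃ m, f^[m] a ≠ b ∧ f (f^[m] a) = b := by
  induction n with
  | zero => exact absurd hn ha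
  | succ n ih =>
    by_cases h : f^[n] a = b
    · exact ih h
    · exact ⟨n, h, by rwa [Function.iterate_succ_apply'] at hn⟩

namespace IsMonotoneSublinear

section General

variable {E E' : Type*} [AddCommMonoid E] [Preorder E] [Module ℝ E]
  [AddCommMonoid E'] [Preorder E'] [Module ℝ E'] {F : E → E'}

theorem pi {ι : Type*} {F : E → ι → ℝ} (h : ∀ k, IsMonotoneSublinear fun y => F y k) :
    IsMonotoneSublinear F where
  monotone _ _ hyz k := (h k).monotone hyz
  map_smul c hc y := funext fun k => (h k).map_smul c hc y
  map_add_le y z k := (h k).map_add_le y z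

theorem map_zero (hF : IsMonotoneSublinear F) : F 0 = 0 := by
  simpa using hF.map_smul 0 le_rfl 0

theorem map_le_smul_map (hF : IsMonotoneSublinear F) {c : ℝ} {y z : E} (hc : 0 ≤ c)
    (h : y ≤ c • z) : F y ≤ c • F z :=
  hF.map_smul c hc z ▸ hF.monotone h

theorem smul_map_le_map (hF : IsMonotoneSublinear F) {c : ℝ} {y z : E} (hc : 0 ≤ c)
    (h : c • z ≤ y) : c • F z ≤ F y :=
  hF.map_smul c hc z ▸ hF.monotone h

theorem map_comparable (hF : IsMonotoneSublinear F) {y : E} (h : y ≤ 0 ∨ 0 ≤ y) :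
    F y ≤ 0 ∨ 0 ≤ F y :=
  h.imp (fun h => hF.map_zero ▸ hF.monotone h) (fun h => hF.map_zero ▸ hF.monotone h)

end General

theorem map_add_of_map_eq_zero {E E' : Type*} [AddCommMonoid E] [PartialOrder E]
    [IsOrderedAddMonoid E] [Module ℝ E] [AddCommMonoid E'] [PartialOrder E'] [Module ℝ E']
    {F : E → E'} (hF : IsMonotoneSublinear F) {x : E} (hx₀ : 0 ≤ x) (hx : F x = 0) (y : E) :
    F (y + x) = F y :=
  le_antisymm (by simpa [hx] using hF.map_add_le y x) (hF.monotone (le_add_of_nonneg_right hx₀))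

theorem nonneg_map_of_map_eq_zero_of_neg {ι : Type*} [Fintype ι] {F : (ι → ℝ) → ι → ℝ}
    (hF : IsMonotoneSublinear F) {x : ι → ℝ} (hx : F x = 0) (hneg : ∀ k, x k < 0)
    (y : ι → ℝ) : 0 ≤ F y := by
  obtain ⟨c, hc, h⟩ := exists_nonneg_smul_le (y := y) fun k => Or.inl (hneg k)
  simpa [hx] using hF.smul_map_le_map hc h

section Plane

variable {F : (Fin 2 → ℝ) → Fin 2 → ℝ}

theorem comparable_map_of_mul_pos (hF : IsMonotoneSublinear F) {x y : Fin 2 → ℝ} {i : Fin 2}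
    (hx : F x = 0) (h : 0 < x i * y i) : F y ≤ 0 ∨ 0 ≤ F y := by
  obtain ⟨c, hc, h | h⟩ := exists_le_smul_or_smul_le h
  · exact Or.inl (by simpa [hx] using hF.map_le_smul_map hc.le h)
  · exact Or.inr (by simpa [hx] using hF.smul_map_le_map hc.le h)

theorem comparable_map_of_map_eq_zero_of_nonneg (hF : IsMonotoneSublinear F) {x : Fin 2 → ℝ}
    (hx₀ : 0 ≤ x) (hx : x ≠ 0) (hFx : F x = 0) (y : Fin 2 → ℝ) : F y ≤ 0 ∨ 0 ≤ F y := by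
  obtain ⟨i, hi⟩ := (Pi.lt_def.1 (lt_of_le_of_ne hx₀ (Ne.symm hx))).2
  have ht : 0 ≤ (|y i| + 1) / x i := div_nonneg (by positivity) hi.le
  rw [← hF.map_add_of_map_eq_zero (smul_nonneg ht hx₀)
    (by rw [hF.map_smul _ ht, hFx, smul_zero])]
  refine hF.comparable_map_of_mul_pos hFx (i := i) (mul_pos hi ?_)
  simp only [Pi.add_apply, Pi.smul_apply, smul_eq_mul, div_mul_cancel₀ _ hi.ne']
  linarith [neg_abs_le (y i)]

theorem map_ne_zero_of_neg_of_pos (hF : IsMonotoneSublinear F) {i j : Fin 2} (hij : i ≠ j)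
    {v : Fin 2 → ℝ} (hi : F (F v) i < 0) (hj : 0 < F (F v) j) : F (F (F v)) ≠ 0 := by
  intro hx
  have hpre : ∀ y, ¬ (F y ≤ 0 ∨ 0 ≤ F y) → 0 < y i ∧ y j < 0 := by
    intro y hy
    have hyij := (not_comparable_iff_mul_neg hij).1 (mt hF.map_comparable hy)
    have hyi : ¬ y i < 0 := fun h =>
      hy (hF.comparable_map_of_mul_pos hx (mul_pos_of_neg_of_neg hi h))
    have hyj : ¬ 0 < y j := fun h => hy (hF.comparable_map_of_mul_pos hx (mul_pos hj h))
    constructor <;> nlinarith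
  obtain ⟨hwi, hwj⟩ :=
    hpre _ ((not_comparable_iff_mul_neg hij).2 (mul_neg_of_neg_of_pos hi hj))
  obtain ⟨hvi, -⟩ := hpre v ((not_comparable_iff_mul_neg hij).2 (mul_neg_of_pos_of_neg hwi hwj))
  obtain ⟨c, hc, h | h⟩ := exists_le_smul_or_smul_le (mul_pos hwi hvi)
  · have := hF.map_le_smul_map hc.le h i
    simp only [Pi.smul_apply, smul_eq_mul] at this
    nlinarith
  · have := hF.smul_map_le_map hc.le h j
    simp only [Pi.smul_apply, smul_eq_mul] at this
    nlinarith

theorem map_ne_zero_of_not_comparable (hF : IsMonotoneSublinear F) {v : Fin 2 → ℝ}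
    (h : ¬ (F (F v) ≤ 0 ∨ 0 ≤ F (F v))) : F (F (F v)) ≠ 0 := by
  rcases mul_neg_iff.1 ((not_comparable_iff_mul_neg (i := 0) (j := 1) (by decide)).1 h) with
    ⟨h0, h1⟩ | ⟨h0, h1⟩
  · exact hF.map_ne_zero_of_neg_of_pos (by decide) h1 h0
  · exact hF.map_ne_zero_of_neg_of_pos (by decide) h0 h1

theorem nonneg_map_map_of_neg_of_eq_zero (hF : IsMonotoneSublinear F) {i j : Fin 2}
    (hij : i ≠ j) {v : Fin 2 → ℝ} (hx : F (F (F v)) = 0) (hi : F (F v) i < 0)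
    (hj : F (F v) j = 0) (y : Fin 2 → ℝ) : 0 ≤ F (F y) := by
  have hpos : ∀ z : Fin 2 → ℝ, 0 ≤ z j → 0 ≤ F z := by
    intro z hz
    obtain ⟨c, hc, hle⟩ := exists_nonneg_smul_le (x := F (F v)) (y := z) fun k => by
      obtain rfl | rfl := Fin.eq_or_eq_of_ne_of_two hij k
      exacts [Or.inl hi, Or.inr ⟨hj.le, hz⟩]
    simpa [hx] using hF.smul_map_le_map hc hle
  have hwj : F v j < 0 := not_le.1 fun h => hi.not_ge (hpos _ h i)
  have hvj : v j < 0 := not_le.1 fun h => hwj.not_ge (hpos _ h j)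
  obtain ⟨c, hc, h | h⟩ := exists_le_smul_or_smul_le (mul_pos_of_neg_of_neg hwj hvj)
  · have hwi : F v i < 0 := by
      have := hF.map_le_smul_map hc.le h i
      simp only [Pi.smul_apply, smul_eq_mul] at this
      nlinarith
    -- `F v` is strictly negative, so every `y` dominates a nonnegative multiple of it.
    obtain ⟨c', hc', hle⟩ := exists_nonneg_smul_le (x := F v) (y := y) fun k => by
      obtain rfl | rfl := Fin.eq_or_eq_of_ne_of_two hij k
      exacts [Or.inl hwi, Or.inl hwj]
    apply hpos
    simpa [hj] using hF.smul_map_le_map hc' hle j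
  · have := hF.smul_map_le_map hc.le h j
    simp only [Pi.smul_apply, smul_eq_mul, hj, mul_zero] at this
    exact absurd this hwj.not_ge

theorem nonneg_map_map_of_nonpos (hF : IsMonotoneSublinear F) {v : Fin 2 → ℝ}
    (hx : F (F (F v)) = 0) (hle : F (F v) ≤ 0) (hne : F (F v) ≠ 0) (y : Fin 2 → ℝ) :
    0 ≤ F (F y) := by
  obtain ⟨i, hi⟩ := (Pi.lt_def.1 (lt_of_le_of_ne hle hne)).2
  obtain ⟨j, hji⟩ := exists_ne i
  rcases (hle j).lt_or_eq with hj | hj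
  · refine hF.nonneg_map_of_map_eq_zero_of_neg hx (fun k => ?_) (F y)
    obtain rfl | rfl := Fin.eq_or_eq_of_ne_of_two hji.symm k
    exacts [hi, hj]
  · exact hF.nonneg_map_map_of_neg_of_eq_zero hji.symm hx hi hj y

end Plane

end IsMonotoneSublinear

theorem stmt_16
    (k l : ℕ)
    (r : Fin (k + 1) → Fin 2 → ℝ) (q : Fin (l + 1) → Fin 2 → ℝ)
    (hr : ∀ i, (∀ j, 0 ≤ r i j) ∧ ∑ j, r i j ≤ 1)
    (hq : ∀ i, (∀ j, 0 ≤ q i j) ∧ ∑ j, q i j ≤ 1)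
    (F : (Fin 2 → ℝ) → (Fin 2 → ℝ))
    (hF₁ : ∀ v, F v 0 = Finset.univ.sup' Finset.univ_nonempty (fun i => ∑ j, r i j * v j))
    (hF₂ : ∀ v, F v 1 = Finset.univ.sup' Finset.univ_nonempty (fun i => ∑ j, q i j * v j))
    (ε : Fin 2 → ℝ) :
    (∀ n : ℕ, F^[n] ε ≠ 0) ∨ (F^[2] ε ≤ 0 ∨ 0 ≤ F^[2] ε)
  := by
  have hF : IsMonotoneSublinear F := IsMonotoneSublinear.pi <| Fin.forall_fin_two.2
    ⟨isMonotoneSublinear_of_eq_sup'_dotProduct _ (fun i => (hr i).1) hF₁,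
      isMonotoneSublinear_of_eq_sup'_dotProduct _ (fun i => (hq i).1) hF₂⟩
  refine or_iff_not_imp_right.2 fun hu n hn => ?_
  have hu₀ : F^[2] ε ≠ 0 := fun h => hu (Or.inl h.le)
  have hun : F^[n] (F^[2] ε) = 0 := by
    rw [← Function.iterate_add_apply, add_comm, Function.iterate_add_apply, hn,
      Function.iterate_fixed hF.map_zero]
  obtain ⟨m, hx, hFx⟩ := Function.exists_iterate_ne_of_iterate_eq hu₀ hun
  rw [← Function.iterate_add_apply, add_comm, Function.iterate_add_apply] at hx hFx
  set v := F^[m] ε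
  simp only [Function.iterate_succ, Function.comp_apply, Function.iterate_zero, id] at hx hFx hu
  by_cases h₀ : 0 ≤ F (F v)
  · exact hu (hF.comparable_map_of_map_eq_zero_of_nonneg h₀ hx hFx (F ε))
  by_cases h₁ : F (F v) ≤ 0
  · exact hu (Or.inr (hF.nonneg_map_map_of_nonpos hFx h₁ hx ε))
  exact hF.map_ne_zero_of_not_comparable (by tauto) hFx
end

section
/- Let r_1,…,r_k ∈ ℝ² and q_1,…,q_ℓ ∈ ℝ² (k, ℓ ≥ 1) be substochastic row vectors, and define F : ℝ² → ℝ² by F(v) = (min_{1≤i≤k} ⟨r_i, v⟩, min_{1≤j≤ℓ} ⟨q_j, v⟩), which is the componentwise minimum of M_{i,j}·v over the product family of 2×2 matrices M_{i,j} with first row r_i and second row q_j. Then for every ε ∈ ℝ², at least one of the following holds: (1) F^n(ε) ≠ 0 for all n ≥ 0; (2) F²(ε) is comparable with the zero vector 0. -/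
set_option maxHeartbeats 1000000

/-- (+,+) case: impossible. -/
lemma lem_pp {ι : Type*} {a b : ι → ℝ} {w0 w1 y0 y1 : ℝ}
    (ha : ∀ i, 0 ≤ a i) (hb : ∀ i, 0 ≤ b i)
    (hR2 : ∃ i, a i * y0 + b i * y1 = 0)
    (hR3 : ∀ i, y0 ≤ a i * w0 + b i * w1)
    (hy0 : 0 < y0) (hy1 : 0 < y1) : False := by
  obtain ⟨p, hp⟩ := hR2
  have h1 : a p * y0 = 0 := by
    nlinarith [mul_nonneg (ha p) hy0.le, mul_nonneg (hb p) hy1.le]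
  have h2 : b p * y1 = 0 := by
    nlinarith [mul_nonneg (ha p) hy0.le, mul_nonneg (hb p) hy1.le]
  have hap : a p = 0 := by
    rcases mul_eq_zero.mp h1 with h | h
    · exact h
    · linarith
  have hbp : b p = 0 := by
    rcases mul_eq_zero.mp h2 with h | h
    · exact h
    · linarith
  have h3 := hR3 p
  rw [hap, hbp] at h3
  nlinarith

/-- y0 < 0, y1 ≤ 0 case: impossible. -/
lemma lem_neg {ι κ : Type*} {a b : ι → ℝ} {c d : κ → ℝ} {z0 z1 w0 w1 y0 y1 : ℝ}
    (ha : ∀ i, 0 ≤ a i) (hb : ∀ i, 0 ≤ b i) (hc : ∀ j, 0 ≤ c j) (hd : ∀ j, 0 ≤ d j)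
    (hR1 : ∀ i, 0 ≤ a i * y0 + b i * y1)
    (hR4 : ∃ i, a i * w0 + b i * w1 = y0)
    (hQ1 : ∀ j, 0 ≤ c j * y0 + d j * y1)
    (hQ3 : ∀ j, y1 ≤ c j * w0 + d j * w1)
    (hQ6 : ∃ j, c j * z0 + d j * z1 = w1)
    (hy0 : y0 < 0) (hy1 : y1 ≤ 0) : False := by
  obtain ⟨p, hp⟩ := hR4
  have h1 := hR1 p
  have ha1 : a p * y0 ≤ 0 := mul_nonpos_of_nonneg_of_nonpos (ha p) hy0.le
  have hb1 : b p * y1 ≤ 0 := mul_nonpos_of_nonneg_of_nonpos (hb p) hy1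
  have hay : a p * y0 = 0 := by linarith
  have hby : b p * y1 = 0 := by linarith
  have hap : a p = 0 := by
    rcases mul_eq_zero.mp hay with h | h
    · exact h
    · linarith
  have hbw : b p * w1 = y0 := by
    rw [hap] at hp; linarith
  have hbp : 0 < b p := by
    rcases (hb p).lt_or_eq with h | h
    · exact h
    · exfalso; rw [← h] at hbw; nlinarith
  have hw1 : w1 < 0 := by
    by_contra hcon
    push_neg at hcon
    nlinarith [mul_nonneg hbp.le hcon]
  have hy1' : y1 = 0 := by
    rcases mul_eq_zero.mp hby with h | h
    · exfalso; linarith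
    · exact h
  obtain ⟨t, htq⟩ := hQ6
  have h2 := hQ1 t
  rw [hy1'] at h2
  have hct : c t = 0 := by
    by_contra hcon
    have hct' : 0 < c t := (hc t).lt_of_ne (Ne.symm hcon)
    nlinarith [mul_neg_of_pos_of_neg hct' hy0]
  have h3 := hQ3 t
  rw [hy1', hct] at h3
  have hdt : d t = 0 := by
    by_contra hcon
    have hdt' : 0 < d t := (hd t).lt_of_ne (Ne.symm hcon)
    nlinarith [mul_neg_of_pos_of_neg hdt' hw1]
  rw [hct, hdt] at htq
  nlinarith

/-- y0 > 0, y1 ≤ 0 case: impossible. -/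
lemma lem_pos {ι κ : Type*} {a b : ι → ℝ} {c d : κ → ℝ} {z0 z1 w0 w1 y0 y1 : ℝ}
    (ha : ∀ i, 0 ≤ a i) (hb : ∀ i, 0 ≤ b i) (hc : ∀ j, 0 ≤ c j) (hd : ∀ j, 0 ≤ d j)
    (hR1 : ∀ i, 0 ≤ a i * y0 + b i * y1)
    (hR2 : ∃ i, a i * y0 + b i * y1 = 0)
    (hR3 : ∀ i, y0 ≤ a i * w0 + b i * w1)
    (hQ1 : ∀ j, 0 ≤ c j * y0 + d j * y1)
    (hQ2 : ∃ j, c j * y0 + d j * y1 = 0)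
    (hQ4 : ∃ j, c j * w0 + d j * w1 = y1)
    (hQ5 : ∀ j, w1 ≤ c j * z0 + d j * z1)
    (hR6 : ∃ i, a i * z0 + b i * z1 = w0)
    (hy0 : 0 < y0) (hy1 : y1 ≤ 0) : False := by
  obtain ⟨p, hp⟩ := hR2
  obtain ⟨s, hs⟩ := hQ2
  obtain ⟨t, ht⟩ := hQ4
  obtain ⟨u, hu⟩ := hR6
  rcases hy1.lt_or_eq with hy1' | hy1'
  · -- y1 < 0
    have hbp : 0 < b p := by
      by_contra hcon
      push_neg at hcon
      have hb0 : b p = 0 := le_antisymm hcon (hb p)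
      have hap0 : a p * y0 = 0 := by rw [hb0] at hp; linarith
      have ha0 : a p = 0 := by
        rcases mul_eq_zero.mp hap0 with h | h
        · exact h
        · linarith
      have h3 := hR3 p
      rw [ha0, hb0] at h3
      nlinarith
    have hap : 0 < a p := by
      rcases (ha p).lt_or_eq with h | h
      · exact h
      · exfalso
        rw [← h] at hp
        have hby0 : b p * y1 = 0 := by linarith
        nlinarith [mul_neg_of_pos_of_neg hbp hy1']
    rcases lt_trichotomy w0 0 with hw0 | hw0 | hw0
    · -- w0 < 0
      have hw1 : 0 < w1 := by
        by_contra hcon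
        push_neg at hcon
        have h1 : a p * w0 ≤ 0 := mul_nonpos_of_nonneg_of_nonpos (ha p) hw0.le
        have h2 : b p * w1 ≤ 0 := mul_nonpos_of_nonneg_of_nonpos (hb p) hcon
        linarith [hR3 p]
      rcases lt_trichotomy z0 0 with hz0 | hz0 | hz0
      · -- z0 < 0
        have h5 := hQ5 t
        have hdz : 0 < d t * z1 := by
          nlinarith [mul_nonpos_of_nonneg_of_nonpos (hc t) hz0.le]
        have hdt : 0 < d t := by
          rcases (hd t).lt_or_eq with h | h
          · exact h
          · exfalso; rw [← h] at hdz; nlinarith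
        have hz1 : 0 < z1 := by
          by_contra hcon
          push_neg at hcon
          nlinarith [mul_nonpos_of_nonneg_of_nonpos (hd t) hcon]
        have e1 : 0 ≤ (c t * z0 + d t * z1 - w1) * (-w0) :=
          mul_nonneg (by linarith) (by linarith)
        have e3 : (c t * w0 + d t * w1) * z0 = y1 * z0 := by rw [ht]
        have hD : 0 < w1 * z0 - w0 * z1 := by
          nlinarith [e1, e3, mul_pos_of_neg_of_neg hy1' hz0,
            mul_pos hw1 (neg_pos.2 hw0), hdt]
        have hbu : 0 < b u := by
          by_contra hcon
          push_neg at hcon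
          have hb0 : b u = 0 := le_antisymm hcon (hb u)
          have h3 := hR3 u
          rw [hb0] at h3
          nlinarith [mul_nonpos_of_nonneg_of_nonpos (ha u) hw0.le]
        have f1 : a u * (-w0) < b u * w1 := by nlinarith [hR3 u]
        have f2 : b u * z1 < a u * (-z0) := by nlinarith [hu]
        have hau : 0 < a u := by
          by_contra hcon
          push_neg at hcon
          have ha0 : a u = 0 := le_antisymm hcon (ha u)
          rw [ha0] at f2
          nlinarith [mul_nonneg (hb u) hz1.le]
        have hprod := mul_lt_mul'' f1 f2
          (mul_nonneg (ha u) (by linarith)) (mul_nonneg (hb u) hz1.le)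
        nlinarith [hprod, mul_pos (mul_pos hau hbu) hD]
      · -- z0 = 0
        have hu' : b u * z1 = w0 := by rw [hz0] at hu; linarith [hu]
        have hz1 : z1 < 0 := by
          by_contra hcon
          push_neg at hcon
          nlinarith [mul_nonneg (hb u) hcon]
        have h5 := hQ5 t
        rw [hz0] at h5
        nlinarith [mul_nonpos_of_nonneg_of_nonpos (hd t) hz1.le]
      · -- z0 > 0
        have hds : 0 < d s := by
          by_contra hcon
          push_neg at hcon
          have hd0 : d s = 0 := le_antisymm hcon (hd s)
          have hcs0 : c s * y0 = 0 := by rw [hd0] at hs; linarith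
          have hc0 : c s = 0 := by
            rcases mul_eq_zero.mp hcs0 with h | h
            · exact h
            · linarith
          have h5 := hQ5 s
          rw [hc0, hd0] at h5
          nlinarith
        have e : (c s * z0 + d s * z1) * y0 = d s * ((-y1) * z0 + y0 * z1) := by
          linear_combination z0 * hs
        have hC : 0 < (-y1) * z0 + y0 * z1 := by
          nlinarith [mul_le_mul_of_nonneg_right (hQ5 s) hy0.le, mul_pos hw1 hy0, e, hds]
        have e2 : (a u * z0 + b u * z1) * y0 = w0 * y0 := by rw [hu]
        nlinarith [mul_nonneg (hR1 u) hz0.le, mul_nonneg (hb u) hC.le, e2,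
          mul_neg_of_neg_of_pos hw0 hy0]
    · -- w0 = 0
      have ht' : d t * w1 = y1 := by rw [hw0] at ht; linarith [ht]
      have hw1 : w1 < 0 := by
        by_contra hcon
        push_neg at hcon
        nlinarith [mul_nonneg (hd t) hcon]
      have h3 := hR3 p
      rw [hw0] at h3
      nlinarith [mul_nonpos_of_nonneg_of_nonpos (hb p) hw1.le]
    · -- w0 > 0
      have h4 : y0 * y0 ≤ (a p * w0 + b p * w1) * y0 :=
        mul_le_mul_of_nonneg_right (hR3 p) hy0.le
      have h5 : (a p * w0 + b p * w1) * y0 = b p * (w1 * y0 - y1 * w0) := by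
        linear_combination w0 * hp
      have hkey : 0 < w1 * y0 - y1 * w0 := by
        nlinarith [mul_pos hy0 hy0, hbp]
      have e6 : 0 ≤ (c t * y0 + d t * y1) * w0 := mul_nonneg (hQ1 t) hw0.le
      have e7 : 0 ≤ d t * (w1 * y0 - y1 * w0) := mul_nonneg (hd t) hkey.le
      have e9 : (c t * w0 + d t * w1) * y0 = y1 * y0 := by rw [ht]
      nlinarith [e6, e7, e9, mul_neg_of_neg_of_pos hy1' hy0]
  · -- y1 = 0
    rw [hy1'] at hp hs ht
    have hap : a p = 0 := by
      have h1 : a p * y0 = 0 := by linarith [hp]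
      rcases mul_eq_zero.mp h1 with h | h
      · exact h
      · linarith
    have h3 := hR3 p
    rw [hap] at h3
    have hbw : 0 < b p * w1 := by nlinarith
    have hw1 : 0 < w1 := by
      by_contra hcon
      push_neg at hcon
      nlinarith [mul_nonpos_of_nonneg_of_nonpos (hb p) hcon]
    have hcs : c s = 0 := by
      have h1 : c s * y0 = 0 := by linarith [hs]
      rcases mul_eq_zero.mp h1 with h | h
      · exact h
      · linarith
    rcases lt_trichotomy w0 0 with hw0 | hw0 | hw0
    · -- w0 < 0
      have h5s := hQ5 s
      rw [hcs] at h5s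
      have hdz : 0 < d s * z1 := by nlinarith
      have hz1 : 0 < z1 := by
        by_contra hcon
        push_neg at hcon
        nlinarith [mul_nonpos_of_nonneg_of_nonpos (hd s) hcon]
      have hbuz : 0 ≤ b u * z1 := mul_nonneg (hb u) hz1.le
      have hazu : a u * z0 < 0 := by linarith [hu]
      have hz0 : z0 < 0 := by
        by_contra hcon
        push_neg at hcon
        nlinarith [mul_nonneg (ha u) hcon]
      have hau : 0 < a u := by
        rcases (ha u).lt_or_eq with h | h
        · exact h
        · exfalso; rw [← h] at hazu; nlinarith
      have hbu : 0 < b u := by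
        by_contra hcon
        push_neg at hcon
        have hb0 : b u = 0 := le_antisymm hcon (hb u)
        have h3u := hR3 u
        rw [hb0] at h3u
        nlinarith [mul_nonpos_of_nonneg_of_nonpos (ha u) hw0.le]
      have f1 : a u * (-w0) < b u * w1 := by nlinarith [hR3 u]
      have f2 : b u * z1 < a u * (-z0) := by nlinarith [hu]
      have hprod := mul_lt_mul'' f1 f2
        (mul_nonneg (ha u) (by linarith)) hbuz
      have hAB : 0 < w1 * (-z0) - (-w0) * z1 := by
        nlinarith [hprod, mul_pos hau hbu]
      have h5t := hQ5 t
      have hct : 0 < c t := by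
        by_contra hcon
        push_neg at hcon
        have hc0 : c t = 0 := le_antisymm hcon (hc t)
        have hdw0 : d t * w1 = 0 := by rw [hc0] at ht; linarith [ht]
        have hd0 : d t = 0 := by
          rcases mul_eq_zero.mp hdw0 with h | h
          · exact h
          · linarith
        rw [hc0, hd0] at h5t
        nlinarith
      have hdt : 0 < d t := by
        by_contra hcon
        push_neg at hcon
        have hd0 : d t = 0 := le_antisymm hcon (hd t)
        rw [hd0] at ht
        nlinarith [mul_pos hct (neg_pos.2 hw0)]
      have g1 : c t * (-z0) < d t * z1 := by nlinarith [h5t]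
      have e : (c t * w0 + d t * w1) * z1 = 0 := by rw [ht, zero_mul]
      nlinarith [mul_lt_mul_of_pos_right g1 hw1, mul_pos hct hAB, e]
    · -- w0 = 0
      have hdt0 : d t * w1 = 0 := by rw [hw0] at ht; linarith [ht]
      have hd0 : d t = 0 := by
        rcases mul_eq_zero.mp hdt0 with h | h
        · exact h
        · linarith
      have h5t := hQ5 t
      rw [hd0] at h5t
      have hcz : 0 < c t * z0 := by nlinarith
      have hz0 : 0 < z0 := by
        by_contra hcon
        push_neg at hcon
        nlinarith [mul_nonpos_of_nonneg_of_nonpos (hc t) hcon]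
      have h5s := hQ5 s
      rw [hcs] at h5s
      have hdz : 0 < d s * z1 := by nlinarith
      have hz1 : 0 < z1 := by
        by_contra hcon
        push_neg at hcon
        nlinarith [mul_nonpos_of_nonneg_of_nonpos (hd s) hcon]
      have hbu : 0 < b u := by
        by_contra hcon
        push_neg at hcon
        have hb0 : b u = 0 := le_antisymm hcon (hb u)
        have h3u := hR3 u
        rw [hw0, hb0] at h3u
        nlinarith [mul_nonneg (ha u) (le_of_eq rfl)]
      rw [hw0] at hu
      nlinarith [mul_nonneg (ha u) hz0.le, mul_pos hbu hz1]
    · -- w0 > 0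
      have hc1 : 0 ≤ c t * w0 := mul_nonneg (hc t) hw0.le
      have hc2 : 0 ≤ d t * w1 := mul_nonneg (hd t) hw1.le
      have hcw : c t * w0 = 0 := by linarith [ht]
      have hc0 : c t = 0 := by
        rcases mul_eq_zero.mp hcw with h | h
        · exact h
        · linarith
      have hdw : d t * w1 = 0 := by rw [hc0] at ht; linarith [ht]
      have hd0 : d t = 0 := by
        rcases mul_eq_zero.mp hdw with h | h
        · exact h
        · linarith
      have h5t := hQ5 t
      rw [hc0, hd0] at h5t
      nlinarith

lemma extract_min {m : ℕ} (g : Fin (m + 1) → Fin 2 → ℝ) (v : Fin 2 → ℝ) (t : ℝ)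
    (ht : t = Finset.univ.inf' Finset.univ_nonempty (fun i => ∑ j, g i j * v j)) :
    (∀ i, t ≤ g i 0 * v 0 + g i 1 * v 1) ∧ (∃ i, g i 0 * v 0 + g i 1 * v 1 = t) := by
  constructor
  · intro i
    have h := Finset.inf'_le (f := fun i => ∑ j, g i j * v j) (Finset.mem_univ i)
    have h2 : t ≤ ∑ j, g i j * v j := ht.le.trans h
    simpa [Fin.sum_univ_two] using h2
  · obtain ⟨i, -, hi⟩ := Finset.exists_mem_eq_inf' Finset.univ_nonempty
      (fun i => ∑ j, g i j * v j)
    refine ⟨i, ?_⟩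
    rw [ht, hi]
    simp [Fin.sum_univ_two]

theorem stmt_17
    (k l : ℕ)
    (r : Fin (k + 1) → Fin 2 → ℝ) (q : Fin (l + 1) → Fin 2 → ℝ)
    (hr : ∀ i, (∀ j, 0 ≤ r i j) ∧ ∑ j, r i j ≤ 1)
    (hq : ∀ i, (∀ j, 0 ≤ q i j) ∧ ∑ j, q i j ≤ 1)
    (F : (Fin 2 → ℝ) → (Fin 2 → ℝ))
    (hF₁ : ∀ v, F v 0 = Finset.univ.inf' Finset.univ_nonempty (fun i => ∑ j, r i j * v j))
    (hF₂ : ∀ v, F v 1 = Finset.univ.inf' Finset.univ_nonempty (fun i => ∑ j, q i j * v j))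
    (ε : Fin 2 → ℝ) :
    (∀ n : ℕ, F^[n] ε ≠ 0) ∨ (F^[2] ε ≤ 0 ∨ 0 ≤ F^[2] ε)
  := by
  by_cases hall : ∀ n : ℕ, F^[n] ε ≠ 0
  · exact Or.inl hall
  push_neg at hall
  obtain ⟨n, hn⟩ := hall
  right; left
  have ha : ∀ i, 0 ≤ r i 0 := fun i => (hr i).1 0
  have hb : ∀ i, 0 ≤ r i 1 := fun i => (hr i).1 1
  have hc : ∀ j, 0 ≤ q j 0 := fun j => (hq j).1 0
  have hd : ∀ j, 0 ≤ q j 1 := fun j => (hq j).1 1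
  have hF0 : F 0 = 0 := by
    have h0 : F 0 0 = 0 := by rw [hF₁]; simp
    have h1 : F 0 1 = 0 := by rw [hF₂]; simp
    funext i
    fin_cases i
    · simpa using h0
    · simpa using h1
  -- Key step: F³ z = 0 → F² z = 0
  have key : ∀ z : Fin 2 → ℝ, F (F (F z)) = 0 → F (F z) = 0 := by
    intro z hz3
    obtain ⟨hR5, hR6⟩ := extract_min r z (F z 0) (hF₁ z)
    obtain ⟨hQ5, hQ6⟩ := extract_min q z (F z 1) (hF₂ z)
    obtain ⟨hR3, hR4⟩ := extract_min r (F z) (F (F z) 0) (hF₁ (F z))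
    obtain ⟨hQ3, hQ4⟩ := extract_min q (F z) (F (F z) 1) (hF₂ (F z))
    obtain ⟨hR1, hR2⟩ := extract_min r (F (F z)) 0
      (by rw [← hF₁ (F (F z)), hz3]; simp)
    obtain ⟨hQ1, hQ2⟩ := extract_min q (F (F z)) 0
      (by rw [← hF₂ (F (F z)), hz3]; simp)
    have goal0 : F (F z) 0 = 0 ∧ F (F z) 1 = 0 := by
      rcases lt_trichotomy (F (F z) 0) 0 with h0 | h0 | h0 <;>
        rcases lt_trichotomy (F (F z) 1) 0 with h1 | h1 | h1
      · exact (lem_neg ha hb hc hd hR1 hR4 hQ1 hQ3 hQ6 h0 h1.le).elim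
      · exact (lem_neg ha hb hc hd hR1 hR4 hQ1 hQ3 hQ6 h0 (le_of_eq h1)).elim
      · -- y0 < 0 < y1 : swapped lem_pos
        exact (lem_pos (z0 := z 1) (z1 := z 0) (w0 := F z 1) (w1 := F z 0)
          (y0 := F (F z) 1) (y1 := F (F z) 0) hd hc hb ha
          (fun j => by linarith [hQ1 j]) (by obtain ⟨j, h⟩ := hQ2; exact ⟨j, by linarith⟩)
          (fun j => by linarith [hQ3 j])
          (fun i => by linarith [hR1 i]) (by obtain ⟨i, h⟩ := hR2; exact ⟨i, by linarith⟩)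
          (by obtain ⟨i, h⟩ := hR4; exact ⟨i, by linarith⟩)
          (fun i => by linarith [hR5 i])
          (by obtain ⟨j, h⟩ := hQ6; exact ⟨j, by linarith⟩)
          h1 h0.le).elim
      · -- y0 = 0, y1 < 0 : swapped lem_neg
        exact (lem_neg (z0 := z 1) (z1 := z 0) (w0 := F z 1) (w1 := F z 0)
          (y0 := F (F z) 1) (y1 := F (F z) 0) hd hc hb ha
          (fun j => by linarith [hQ1 j])
          (by obtain ⟨j, h⟩ := hQ4; exact ⟨j, by linarith⟩)
          (fun i => by linarith [hR1 i])
          (fun i => by linarith [hR3 i])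
          (by obtain ⟨i, h⟩ := hR6; exact ⟨i, by linarith⟩)
          h1 (le_of_eq h0)).elim
      · exact ⟨h0, h1⟩
      · -- y0 = 0, y1 > 0 : swapped lem_pos
        exact (lem_pos (z0 := z 1) (z1 := z 0) (w0 := F z 1) (w1 := F z 0)
          (y0 := F (F z) 1) (y1 := F (F z) 0) hd hc hb ha
          (fun j => by linarith [hQ1 j]) (by obtain ⟨j, h⟩ := hQ2; exact ⟨j, by linarith⟩)
          (fun j => by linarith [hQ3 j])
          (fun i => by linarith [hR1 i]) (by obtain ⟨i, h⟩ := hR2; exact ⟨i, by linarith⟩)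
          (by obtain ⟨i, h⟩ := hR4; exact ⟨i, by linarith⟩)
          (fun i => by linarith [hR5 i])
          (by obtain ⟨j, h⟩ := hQ6; exact ⟨j, by linarith⟩)
          h1 (le_of_eq h0)).elim
      · exact (lem_pos ha hb hc hd hR1 hR2 hR3 hQ1 hQ2 hQ4 hQ5 hR6
          h0 h1.le).elim
      · exact (lem_pos ha hb hc hd hR1 hR2 hR3 hQ1 hQ2 hQ4 hQ5 hR6
          h0 (le_of_eq h1)).elim
      · exact (lem_pp ha hb hR2 hR3 h0 h1).elim
    funext i
    fin_cases i
    · simpa using goal0.1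
    · simpa using goal0.2
  have iter3 : ∀ (p : ℕ) (x : Fin 2 → ℝ), F^[p + 3] x = F (F (F (F^[p] x))) := by
    intro p x
    rw [show p + 3 = 3 + p by omega, Function.iterate_add_apply]
    rfl
  have iter2 : ∀ (p : ℕ) (x : Fin 2 → ℝ), F^[p + 2] x = F (F (F^[p] x)) := by
    intro p x
    rw [show p + 2 = 2 + p by omega, Function.iterate_add_apply]
    rfl
  have main : ∀ m : ℕ, F^[m + 2] ε = 0 → F^[2] ε = 0 := by
    intro m
    induction m with
    | zero => exact id
    | succ p ih =>
      intro h
      apply ih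
      rw [show p + 1 + 2 = p + 3 by omega, iter3 p ε] at h
      rw [iter2 p ε]
      exact key _ h
  rcases n with _ | _ | m
  · -- n = 0 : ε = 0
    simp only [Function.iterate_zero, id_eq] at hn
    have h2 : F^[2] ε = 0 := by
      rw [hn]
      exact Function.iterate_fixed hF0 2
    exact le_of_eq h2
  · -- n = 1 : F ε = 0
    rw [Function.iterate_succ_apply', Function.iterate_zero_apply] at hn
    have h2 : F^[2] ε = 0 := by
      have e : F^[2] ε = F (F ε) := iter2 0 ε
      rw [e, hn, hF0]
    exact le_of_eq h2
  · exact le_of_eq (main m hn)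
end

section
/- Let M be a 2×2 real matrix with all entries nonnegative and determinant zero (a singular nonnegative matrix). Then for every ε ∈ ℝ², the vector M·ε is comparable with the zero vector: either M·ε ≥ 0 or M·ε ≤ 0 componentwise. -/
theorem stmt_18
    (M : Matrix (Fin 2) (Fin 2) ℝ)
    (hnn : ∀ i j, 0 ≤ M i j)
    (hdet : M.det = 0)
    (ε : Fin 2 → ℝ) :
    0 ≤ M.mulVec ε ∨ M.mulVec ε ≤ 0
  := by
  have ha := hnn 0 0
  have hb := hnn 0 1
  have hc := hnn 1 0
  have hd := hnn 1 1
  have hdet' : M 0 0 * M 1 1 - M 0 1 * M 1 0 = 0 := by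
    simpa [Matrix.det_fin_two] using hdet
  have key : (∃ l : ℝ, 0 ≤ l ∧ M 0 0 = l * M 1 0 ∧ M 0 1 = l * M 1 1) ∨
      (∃ l : ℝ, 0 ≤ l ∧ M 1 0 = l * M 0 0 ∧ M 1 1 = l * M 0 1) := by
    rcases eq_or_lt_of_le hc with hc0 | hc0
    · rcases eq_or_lt_of_le hd with hd0 | hd0
      · right
        exact ⟨0, le_refl 0, by simp [← hc0], by simp [← hd0]⟩
      · left
        have ha0 : M 0 0 = 0 := by nlinarith
        refine ⟨M 0 1 / M 1 1, div_nonneg hb hd, ?_, ?_⟩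
        · rw [ha0, ← hc0]; ring
        · field_simp
    · left
      refine ⟨M 0 0 / M 1 0, div_nonneg ha hc0.le, ?_, ?_⟩
      · field_simp
      · field_simp
        nlinarith
  have hv0 : M.mulVec ε 0 = M 0 0 * ε 0 + M 0 1 * ε 1 := by
    simp [Matrix.mulVec, dotProduct, Fin.sum_univ_two]
  have hv1 : M.mulVec ε 1 = M 1 0 * ε 0 + M 1 1 * ε 1 := by
    simp [Matrix.mulVec, dotProduct, Fin.sum_univ_two]
  rcases key with ⟨l, hl, h1, h2⟩ | ⟨l, hl, h1, h2⟩
  · have hrel : M.mulVec ε 0 = l * M.mulVec ε 1 := by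
      rw [hv0, hv1, h1, h2]; ring
    rcases le_total 0 (M.mulVec ε 1) with h | h
    · left
      intro i
      fin_cases i
      · simpa [hrel] using mul_nonneg hl h
      · exact h
    · right
      intro i
      fin_cases i
      · simpa [hrel] using mul_nonpos_of_nonneg_of_nonpos hl h
      · exact h
  · have hrel : M.mulVec ε 1 = l * M.mulVec ε 0 := by
      rw [hv0, hv1, h1, h2]; ring
    rcases le_total 0 (M.mulVec ε 0) with h | h
    · left
      intro i
      fin_cases i
      · exact h
      · simpa [hrel] using mul_nonneg hl h
    · right
      intro i
      fin_cases i
      · exact h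
      · simpa [hrel] using mul_nonpos_of_nonneg_of_nonpos hl h
end

section
/- Let Φmax be a max-Bellman operator on ℝ^d, let t ∈ [0,1]^d with Φmax(t) = t, and let s ∈ [0,1]^d with s ≤ t componentwise. If Φmax^n(s) = t for some n ≥ 0, then Φmax^n(s) = t for some n < 2^d. -/
theorem stmt_19
    (d : ℕ) (hd : 1 ≤ d)
    (A : Fin d → Type) [∀ i, Fintype (A i)] [∀ i, Nonempty (A i)]
    (p : ∀ i, A i → Fin d → ℝ) (c : ∀ i, A i → ℝ)
    (hp : ∀ i a j, 0 ≤ p i a j)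
    (hc : ∀ i a, 0 ≤ c i a)
    (hsub : ∀ i a, c i a + ∑ j, p i a j ≤ 1)
    (Φ : (Fin d → ℝ) → (Fin d → ℝ))
    (hΦ : ∀ x i, Φ x i =
      Finset.univ.sup' Finset.univ_nonempty (fun a : A i => (∑ j, p i a j * x j) + c i a))
    (t : Fin d → ℝ) (ht : ∀ i, t i ∈ Set.Icc (0:ℝ) 1) (hfix : Φ t = t)
    (s : Fin d → ℝ) (hs : ∀ i, s i ∈ Set.Icc (0:ℝ) 1) (hst : s ≤ t)
    (hreach : ∃ n : ℕ, Φ^[n] s = t) :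
    ∃ n < 2 ^ d, Φ^[n] s = t
  := by
  classical
  -- monotonicity of Φ
  have hmono : ∀ x y : Fin d → ℝ, x ≤ y → Φ x ≤ Φ y := by
    intro x y hxy i
    rw [hΦ, hΦ]
    apply Finset.sup'_le
    intro a _
    refine le_trans ?_ (Finset.le_sup' (fun a : A i => (∑ j, p i a j * y j) + c i a)
      (Finset.mem_univ a))
    gcongr with j
    · exact hp i a j
    · exact hxy j
  -- iterates stay below t
  have hle : ∀ k, Φ^[k] s ≤ t := by
    intro k
    induction k with
    | zero => exact hst
    | succ k ih =>
      rw [Function.iterate_succ_apply']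
      calc Φ (Φ^[k] s) ≤ Φ t := hmono _ _ ih
      _ = t := hfix
  -- key determinism lemma
  have key : ∀ x y : Fin d → ℝ, x ≤ t → y ≤ t → (∀ i, x i = t i → y i = t i) →
      ∀ i, Φ x i = t i → Φ y i = t i := by
    intro x y hx hy hxy i hΦx
    obtain ⟨a₀, -, ha₀⟩ := Finset.exists_mem_eq_sup' (Finset.univ_nonempty (α := A i))
      (fun a : A i => (∑ j, p i a j * x j) + c i a)
    have hx_eq : (∑ j, p i a₀ j * x j) + c i a₀ = t i := by
      rw [← ha₀, ← hΦ]; exact hΦx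
    have hLt_le : (∑ j, p i a₀ j * t j) + c i a₀ ≤ t i := by
      have h1 : Φ t i = t i := by rw [hfix]
      rw [← h1, hΦ]
      exact Finset.le_sup' (fun a : A i => (∑ j, p i a j * t j) + c i a) (Finset.mem_univ a₀)
    have hLx_le : (∑ j, p i a₀ j * x j) ≤ (∑ j, p i a₀ j * t j) := by
      gcongr with j
      · exact hp i a₀ j
      · exact hx j
    have hsum_eq : (∑ j, p i a₀ j * x j) = (∑ j, p i a₀ j * t j) := by
      have := hx_eq ▸ hLt_le
      linarith
    have hterm : ∀ j : Fin d, p i a₀ j * x j = p i a₀ j * t j := by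
      have := (Finset.sum_eq_sum_iff_of_le (s := Finset.univ)
        (f := fun j => p i a₀ j * x j) (g := fun j => p i a₀ j * t j)
        (fun j _ => mul_le_mul_of_nonneg_left (hx j) (hp i a₀ j))).mp hsum_eq
      exact fun j => this j (Finset.mem_univ j)
    have htermy : ∀ j : Fin d, p i a₀ j * y j = p i a₀ j * t j := by
      intro j
      rcases eq_or_lt_of_le (hp i a₀ j) with h0 | h0
      · rw [← h0]; ring
      · have hxj : x j = t j := by
          have := hterm j
          exact mul_left_cancel₀ (ne_of_gt h0) this
        rw [hxy j hxj]
    have hy_ge : t i ≤ Φ y i := by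
      rw [hΦ]
      refine le_trans ?_ (Finset.le_sup' (fun a : A i => (∑ j, p i a j * y j) + c i a)
        (Finset.mem_univ a₀))
      have : (∑ j, p i a₀ j * y j) = (∑ j, p i a₀ j * t j) := by
        exact Finset.sum_congr rfl (fun j _ => htermy j)
      rw [this]; linarith
    have hy_le : Φ y i ≤ t i := by
      calc Φ y i ≤ Φ t i := hmono _ _ hy i
      _ = t i := by rw [hfix]
    linarith
  -- coincidence sets
  set E : ℕ → Finset (Fin d) := fun k => Finset.univ.filter (fun i => Φ^[k] s i = t i) with hE
  have hEmem : ∀ k i, i ∈ E k ↔ Φ^[k] s i = t i := by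
    intro k i; simp [hE]
  have step : ∀ k m, E k = E m → E (k+1) = E (m+1) := by
    intro k m h
    ext i
    rw [hEmem, hEmem, Function.iterate_succ_apply', Function.iterate_succ_apply']
    constructor
    · exact key _ _ (hle k) (hle m) (fun j hj => by
        rw [← hEmem] at hj ⊢; rw [← h]; exact hj) i
    · exact key _ _ (hle m) (hle k) (fun j hj => by
        rw [← hEmem] at hj ⊢; rw [h]; exact hj) i
  have shift : ∀ a b j, E a = E b → E (a + j) = E (b + j) := by
    intro a b j h
    induction j with
    | zero => simpa using h
    | succ j ih => simpa [← Nat.add_assoc] using step _ _ ih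
  -- pigeonhole: two coincidence sets among indices 0..2^d coincide
  obtain ⟨a, b, hab, hEab⟩ : ∃ a b : Fin (2^d + 1), a ≠ b ∧ E a = E b := by
    apply Fintype.exists_ne_map_eq_of_card_lt (fun k : Fin (2^d + 1) => E k)
    simp [Fintype.card_finset]
  -- wlog a < b, as naturals
  obtain ⟨a', b', hlt, hb', hE'⟩ : ∃ a' b' : ℕ, a' < b' ∧ b' ≤ 2^d ∧ E a' = E b' := by
    rcases lt_or_gt_of_ne hab with h | h
    · exact ⟨a, b, h, Nat.lt_succ_iff.mp b.2, hEab⟩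
    · exact ⟨b, a, h, Nat.lt_succ_iff.mp a.2, hEab.symm⟩
  -- main strong induction
  have main : ∀ n, Φ^[n] s = t → ∃ m < 2^d, Φ^[m] s = t := by
    intro n
    induction n using Nat.strong_induction_on with
    | _ n ih =>
    intro hn
    by_cases h : n < 2^d
    · exact ⟨n, h, hn⟩
    · push_neg at h
      have hbn : b' ≤ n := le_trans hb' h
      have hEper : E (a' + (n - b')) = E (b' + (n - b')) := shift _ _ _ hE'
      have h1 : b' + (n - b') = n := by omega
      have h2 : a' + (n - b') = n - (b' - a') := by omega
      rw [h1, h2] at hEper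
      have hprev : Φ^[n - (b' - a')] s = t := by
        funext i
        have : i ∈ E n := by rw [hEmem, hn]
        rw [← hEper, hEmem] at this
        exact this
      exact ih (n - (b' - a')) (by omega) hprev
  obtain ⟨n, hn⟩ := hreach
  exact main n hn
end
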